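/- arXiv:1904.05393 — 2 statements merged into one kernel-verified Lean document; each statement's English description precedes it below -/
import Mathlib

section
/- Let u : ℝ → ℝ have a derivative u' that is α-Hölder with seminorm at most M on an interval J, and set δ(x₁,t) = u(x₁+t) − u(x₁) − u'(x₁)·t. Then for all x₁, y₁ with all relevant points in J and all t, one has |δ(x₁,t) − δ(y₁,t)| ≤ 5·K·|t|·min{|t|^α, |x₁−y₁|^α}, where K is the C^{1,α} norm of u on J. -/
/-- Taylor-type bound from a Hölder condition on the derivative. -/
lemma holder_taylor_aux (α Kh : ℝ) (hα0 : 0 < α) (hKh : 0 ≤ Kh)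
    (J : Set ℝ) (hJ : J.OrdConnected)
    (u u' : ℝ → ℝ) (hderiv : ∀ x ∈ J, HasDerivAt u (u' x) x)
    (hHolder : ∀ a ∈ J, ∀ b ∈ J, |u' a - u' b| ≤ Kh * |a - b| ^ α)
    (a s : ℝ) (ha : a ∈ J) (has : a + s ∈ J) :
    |u (a + s) - u a - u' a * s| ≤ Kh * |s| ^ α * |s| := by
  set S : Set ℝ := Set.uIcc a (a + s) with hS
  have hSJ : S ⊆ J := hJ.uIcc_subset ha has
  have habs : ∀ x ∈ S, |x - a| ≤ |s| := by
    intro x hx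
    rcases le_total a (a + s) with h | h
    · rw [hS, Set.uIcc_of_le h] at hx
      obtain ⟨h1, h2⟩ := hx
      rw [abs_le]
      constructor <;> linarith [le_abs_self s, neg_abs_le s, abs_nonneg s]
    · rw [hS, Set.uIcc_of_ge h] at hx
      obtain ⟨h1, h2⟩ := hx
      rw [abs_le]
      constructor <;> linarith [le_abs_self s, neg_abs_le s, abs_nonneg s]
  have hbound : ∀ x ∈ S, ‖(fun y => u' y - u' a) x‖ ≤ Kh * |s| ^ α := by
    intro x hx
    have h1 : |u' x - u' a| ≤ Kh * |x - a| ^ α := hHolder x (hSJ hx) a ha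
    have h2 : |x - a| ^ α ≤ |s| ^ α :=
      Real.rpow_le_rpow (abs_nonneg _) (habs x hx) hα0.le
    calc ‖(fun y => u' y - u' a) x‖ = |u' x - u' a| := rfl
      _ ≤ Kh * |x - a| ^ α := h1
      _ ≤ Kh * |s| ^ α := by nlinarith
  have hdg : ∀ x ∈ S, HasDerivWithinAt (fun y => u y - u' a * y)
      ((fun y => u' y - u' a) x) S x := by
    intro x hx
    exact (((hderiv x (hSJ hx)).sub ((hasDerivAt_id x).const_mul (u' a))).hasDerivWithinAt).congr_deriv
      (by ring)
  have hconv : Convex ℝ S := convex_uIcc _ _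
  have := Convex.norm_image_sub_le_of_norm_hasDerivWithin_le hdg hbound hconv
    (Set.left_mem_uIcc) (Set.right_mem_uIcc)
  have heq : (u (a + s) - u' a * (a + s)) - (u a - u' a * a) =
      u (a + s) - u a - u' a * s := by ring
  have hnorm : ‖(u (a + s) - u' a * (a + s)) - (u a - u' a * a)‖ ≤
      Kh * |s| ^ α * ‖a + s - a‖ := this
  rw [heq] at hnorm
  simpa using hnorm

/-- If `u ∈ C^{1,α}(J)` with `C^{1,α}` norm at most `K` on an interval `J`, and
`δ(x₁,t) = u(x₁+t) − u(x₁) − u'(x₁)·t`, then for all `x₁, y₁` with all relevant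
points in `J` and all `t`:
`|δ(x₁,t) − δ(y₁,t)| ≤ 5·K·|t|·min{|t|^α, |x₁−y₁|^α}`. -/
theorem stmt_4 (α K : ℝ) (hα : α ∈ Set.Ioo (0:ℝ) 1)
    (J : Set ℝ) (hJ : J.OrdConnected)
    (u u' : ℝ → ℝ) (hderiv : ∀ x ∈ J, HasDerivAt u (u' x) x)
    (Ku Ku' Kh : ℝ)
    (hbu : ∀ x ∈ J, |u x| ≤ Ku) (hbu' : ∀ x ∈ J, |u' x| ≤ Ku')
    (hHolder : ∀ a ∈ J, ∀ b ∈ J, |u' a - u' b| ≤ Kh * |a - b| ^ α)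
    (hK : Ku + Ku' + Kh ≤ K)
    (x₁ y₁ t : ℝ) (hx : x₁ ∈ J) (hy : y₁ ∈ J) (hxt : x₁ + t ∈ J) (hyt : y₁ + t ∈ J) :
    |(u (x₁ + t) - u x₁ - u' x₁ * t) - (u (y₁ + t) - u y₁ - u' y₁ * t)|
      ≤ 5 * K * |t| * min (|t| ^ α) (|x₁ - y₁| ^ α) := by
  obtain ⟨hα0, hα1⟩ := hα
  by_cases ht : t = 0
  · subst ht; simp
  by_cases hxy : x₁ = y₁
  · subst hxy
    rw [sub_self, abs_zero, sub_self, abs_zero,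
      Real.zero_rpow hα0.ne', min_eq_right (Real.rpow_nonneg (abs_nonneg t) α), mul_zero]
  -- basic positivity facts
  have hs : 0 < |t| := abs_pos.mpr ht
  have hr : 0 < |x₁ - y₁| := abs_pos.mpr (sub_ne_zero.mpr hxy)
  have hrα : 0 < |x₁ - y₁| ^ α := Real.rpow_pos_of_pos hr α
  have hsα : 0 < |t| ^ α := Real.rpow_pos_of_pos hs α
  have hKh : 0 ≤ Kh := by
    have h1 := hHolder x₁ hx y₁ hy
    have h2 : 0 ≤ |u' x₁ - u' y₁| := abs_nonneg _
    nlinarith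
  have hKu : 0 ≤ Ku := (abs_nonneg _).trans (hbu x₁ hx)
  have hKu' : 0 ≤ Ku' := (abs_nonneg _).trans (hbu' x₁ hx)
  have hKhK : Kh ≤ K := by linarith
  have hK0 : 0 ≤ K := by linarith
  set r := |x₁ - y₁| with hrdef
  set s := |t| with hsdef
  rcases le_total s r with hcase | hcase
  · -- |t| ≤ |x₁ - y₁| : use the single-point Taylor bound twice
    rw [min_eq_left (Real.rpow_le_rpow hs.le hcase hα0.le)]
    have h1 := holder_taylor_aux α Kh hα0 hKh J hJ u u' hderiv hHolder x₁ t hx hxt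
    have h2 := holder_taylor_aux α Kh hα0 hKh J hJ u u' hderiv hHolder y₁ t hy hyt
    have h3 : |(u (x₁ + t) - u x₁ - u' x₁ * t) - (u (y₁ + t) - u y₁ - u' y₁ * t)|
        ≤ Kh * s ^ α * s + Kh * s ^ α * s := (abs_sub _ _).trans (by linarith)
    have h4 : 0 ≤ s * s ^ α := mul_nonneg hs.le hsα.le
    nlinarith
  · -- |x₁ - y₁| ≤ |t|
    rw [min_eq_right (Real.rpow_le_rpow hr.le hcase hα0.le)]
    -- A-term
    have hA := holder_taylor_aux α Kh hα0 hKh J hJ u u' hderiv hHolder (y₁ + t) (x₁ - y₁) hyt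
      (by rw [show y₁ + t + (x₁ - y₁) = x₁ + t by ring]; exact hxt)
    rw [show y₁ + t + (x₁ - y₁) = x₁ + t by ring, ← hrdef] at hA
    -- B-term
    have hB := holder_taylor_aux α Kh hα0 hKh J hJ u u' hderiv hHolder y₁ (x₁ - y₁) hy
      (by rw [show y₁ + (x₁ - y₁) = x₁ by ring]; exact hx)
    rw [show y₁ + (x₁ - y₁) = x₁ by ring, ← hrdef] at hB
    -- C-term
    have hC : |u' (y₁ + t) - u' y₁| ≤ Kh * s ^ α := by
      have := hHolder (y₁ + t) hyt y₁ hy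
      rwa [show y₁ + t - y₁ = t by ring] at this
    -- D-term
    have hD : |u' x₁ - u' y₁| ≤ Kh * r ^ α := hHolder x₁ hx y₁ hy
    -- key power inequality: s^α * r ≤ s * r^α
    have hkey : s ^ α * r ≤ s * r ^ α := by
      have h1 : r ^ (1 - α) ≤ s ^ (1 - α) :=
        Real.rpow_le_rpow hr.le hcase (by linarith)
      have h2 : r = r ^ (1 - α) * r ^ α := by
        rw [← Real.rpow_add hr]; norm_num
      have h3 : s = s ^ (1 - α) * s ^ α := by
        rw [← Real.rpow_add hs]; norm_num
      calc s ^ α * r = s ^ α * (r ^ (1 - α) * r ^ α) := by rw [← h2]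
        _ ≤ s ^ α * (s ^ (1 - α) * r ^ α) := by gcongr
        _ = (s ^ (1 - α) * s ^ α) * r ^ α := by ring
        _ = s * r ^ α := by rw [← h3]
    -- decompose
    set A := u (x₁ + t) - u (y₁ + t) - u' (y₁ + t) * (x₁ - y₁) with hAdef
    set B := u x₁ - u y₁ - u' y₁ * (x₁ - y₁) with hBdef
    set C := (u' (y₁ + t) - u' y₁) * (x₁ - y₁) with hCdef
    set D := (u' x₁ - u' y₁) * t with hDdef
    have hdecomp : (u (x₁ + t) - u x₁ - u' x₁ * t) - (u (y₁ + t) - u y₁ - u' y₁ * t)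
        = A - B + C - D := by rw [hAdef, hBdef, hCdef, hDdef]; ring
    have htri : |A - B + C - D| ≤ |A| + |B| + |C| + |D| := by
      calc |A - B + C - D| ≤ |A - B + C| + |D| := abs_sub _ _
        _ ≤ (|A - B| + |C|) + |D| := by linarith [abs_add_le (A - B) C]
        _ ≤ (|A| + |B| + |C|) + |D| := by linarith [abs_sub A B]
        _ = |A| + |B| + |C| + |D| := by ring
    have hCb : |C| ≤ Kh * s ^ α * r := by
      rw [hCdef, abs_mul]
      exact mul_le_mul hC (le_refl _) (abs_nonneg _) (by positivity)
    have hDb : |D| ≤ Kh * r ^ α * s := by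
      rw [hDdef, abs_mul]
      exact mul_le_mul hD (le_refl _) (abs_nonneg _) (by positivity)
    rw [hdecomp]
    have hrs : Kh * r ^ α * r ≤ Kh * r ^ α * s := by
      have := mul_le_mul_of_nonneg_left hcase (mul_nonneg hKh hrα.le)
      linarith [this]
    have hCs : Kh * (s ^ α * r) ≤ Kh * (s * r ^ α) := mul_le_mul_of_nonneg_left hkey hKh
    have h4 : 4 * Kh * (s * r ^ α) ≤ 5 * K * (s * r ^ α) := by
      have h5 : (0:ℝ) ≤ 5 * K - 4 * Kh := by linarith
      nlinarith [mul_nonneg h5 (mul_nonneg hs.le hrα.le)]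
    linarith [hA, hB, hCb, hDb, htri, hrs, hCs, h4]
end

section
/- Let σ ∈ (0,1), α ∈ [0, 2σ), and g : ℝ → ℝ measurable with |g(x₁)| ≤ |x₁|^α for all x₁. Then the Poisson-kernel integral u(x₁) = c_σ ∫₁^∞ ((1−|x₁−1|²)/(y²−1))^σ · g(y)/|x₁−1−y| dy, for x₁ ∈ (0,1), satisfies u(x₁) = x₁^σ · w(x₁) where w(x₁) = c_σ ∫₁^∞ ((2−x₁)/(y²−1))^σ · g(y)/(1+y−x₁) dy is well defined (the integral converges absolutely) and bounded for x₁ in compact subsets of [0,1). -/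
/-!
For `0 < x₁ < 1` and `y > 1` one has `1 - |x₁ - 1|² = x₁ (2 - x₁)` and `|x₁ - 1 - y| = 1 + y - x₁`,
so the Poisson integrand is `x₁^σ` times the integrand of `w`, pointwise. For `0 ≤ x₁ ≤ 1` the
latter is dominated, uniformly in `x₁`, by `2^σ (y² - 1)^(-σ) y^(α - 1)`. This majorant is
integrable on `(1, ∞)`: near `1` it behaves like `(y - 1)^(-σ)` with `σ < 1`, and at infinity
like `y^(α - 1 - 2σ)` with `α - 1 - 2σ < -1`.
-/

open MeasureTheory Set

lemma integrableOn_Icc_one_two_rpow_sq_sub_one_mul_rpow {σ : ℝ} (hσ : σ < 1) (β : ℝ) :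
    IntegrableOn (fun y : ℝ => (y ^ 2 - 1) ^ (-σ) * y ^ β) (Icc 1 2) := by
  have h_sing : IntegrableOn (fun y : ℝ => (y - 1) ^ (-σ)) (Icc 1 2) := by
    have h := (intervalIntegral.intervalIntegrable_rpow' (a := 0) (b := 1)
      (show -1 < -σ by linarith)).comp_sub_right 1
    norm_num at h
    rw [integrableOn_Icc_iff_integrableOn_Ioc]
    exact (intervalIntegrable_iff_integrableOn_Ioc_of_le one_le_two).1 h
  have h_cont : ContinuousOn (fun y : ℝ => (y + 1) ^ (-σ) * y ^ β) (Icc 1 2) := by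
    refine ContinuousOn.mul ?_ ?_ <;>
      exact ContinuousOn.rpow_const (by fun_prop) fun y hy => Or.inl (by linarith [hy.1])
  refine (h_sing.mul_continuousOn h_cont isCompact_Icc).congr_fun (fun y hy => ?_)
    measurableSet_Icc
  have hy : 1 ≤ y := hy.1
  simp only [← mul_assoc, ← Real.mul_rpow (by linarith : 0 ≤ y - 1) (by linarith : 0 ≤ y + 1)]
  ring_nf

lemma integrableOn_Ioi_two_rpow_sq_sub_one_mul_rpow {σ β : ℝ} (hσ : 0 ≤ σ)
    (hβ : β < 2 * σ - 1) :
    IntegrableOn (fun y : ℝ => (y ^ 2 - 1) ^ (-σ) * y ^ β) (Ioi 2) := by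
  refine ((integrableOn_Ioi_rpow_of_lt (by linarith : β - 2 * σ < -1) two_pos).const_mul
    (2 ^ σ)).mono' (by fun_prop) ?_
  refine (ae_restrict_iff' measurableSet_Ioi).2 (.of_forall fun y (hy : 2 < y) => ?_)
  have hy0 : 0 < y := by linarith
  have hlow : y ^ 2 / 2 ≤ y ^ 2 - 1 := by nlinarith
  calc ‖(y ^ 2 - 1) ^ (-σ) * y ^ β‖ = (y ^ 2 - 1) ^ (-σ) * y ^ β :=
        Real.norm_of_nonneg (mul_nonneg (Real.rpow_nonneg (by nlinarith) _) (by positivity))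
    _ ≤ (y ^ 2 / 2) ^ (-σ) * y ^ β := mul_le_mul_of_nonneg_right
        (Real.rpow_le_rpow_of_nonpos (by positivity) hlow (neg_nonpos.2 hσ)) (by positivity)
    _ = 2 ^ σ * y ^ (β - 2 * σ) := by
        rw [Real.div_rpow (by positivity) zero_le_two, Real.rpow_neg zero_le_two, div_inv_eq_mul,
          ← Real.rpow_natCast, ← Real.rpow_mul hy0.le, mul_comm _ (2 ^ σ), mul_assoc,
          ← Real.rpow_add hy0]
        ring_nf

lemma integrableOn_Ioi_one_rpow_sq_sub_one_mul_rpow {σ β : ℝ} (hσ₀ : 0 ≤ σ) (hσ₁ : σ < 1)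
    (hβ : β < 2 * σ - 1) :
    IntegrableOn (fun y : ℝ => (y ^ 2 - 1) ^ (-σ) * y ^ β) (Ioi 1) := by
  refine ((integrableOn_Icc_one_two_rpow_sq_sub_one_mul_rpow hσ₁ β).union
    (integrableOn_Ioi_two_rpow_sq_sub_one_mul_rpow hσ₀ hβ)).mono_set ?_
  rw [Icc_union_Ioi_eq_Ici one_le_two]
  exact Ioi_subset_Ici_self

lemma abs_rpow_div_mul_div_le {σ α x₁ y v : ℝ} (hσ : 0 ≤ σ) (hx : x₁ ∈ Icc 0 1) (hy : 1 < y)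
    (hv : |v| ≤ |y| ^ α) :
    |((2 - x₁) / (y ^ 2 - 1)) ^ σ * (v / (1 + y - x₁))|
      ≤ 2 ^ σ * ((y ^ 2 - 1) ^ (-σ) * y ^ (α - 1)) := by
  obtain ⟨hx₀, hx₁⟩ := hx
  have hy₀ : 0 < y := by linarith
  have hden : 0 < y ^ 2 - 1 := by nlinarith
  have hkernel : ((2 - x₁) / (y ^ 2 - 1)) ^ σ ≤ 2 ^ σ * (y ^ 2 - 1) ^ (-σ) :=
    calc ((2 - x₁) / (y ^ 2 - 1)) ^ σ ≤ (2 / (y ^ 2 - 1)) ^ σ :=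
        Real.rpow_le_rpow (div_nonneg (by linarith) hden.le) (by gcongr; linarith) hσ
      _ = 2 ^ σ * (y ^ 2 - 1) ^ (-σ) := by
        rw [Real.div_rpow zero_le_two hden.le, Real.rpow_neg hden.le, div_eq_mul_inv]
  have hquot : |v / (1 + y - x₁)| ≤ y ^ (α - 1) :=
    calc |v / (1 + y - x₁)| = |v| / (1 + y - x₁) := by
          rw [abs_div, abs_of_pos (show 0 < 1 + y - x₁ by linarith)]
      _ ≤ y ^ α / y := div_le_div₀ (by positivity) (hv.trans_eq (by rw [abs_of_pos hy₀])) hy₀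
          (by linarith)
      _ = y ^ (α - 1) := by rw [Real.rpow_sub hy₀, Real.rpow_one]
  rw [abs_mul, abs_of_nonneg (Real.rpow_nonneg (div_nonneg (by linarith) hden.le) _),
    ← mul_assoc]
  exact mul_le_mul hkernel hquot (abs_nonneg _) (by positivity)

noncomputable def poissonIntegrand (σ : ℝ) (g : ℝ → ℝ) (x₁ y : ℝ) : ℝ :=
  ((1 - |x₁ - 1| ^ 2) / (y ^ 2 - 1)) ^ σ * (g y / |x₁ - 1 - y|)

noncomputable def wIntegrand (σ : ℝ) (g : ℝ → ℝ) (x₁ y : ℝ) : ℝ :=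
  ((2 - x₁) / (y ^ 2 - 1)) ^ σ * (g y / (1 + y - x₁))

lemma poissonIntegrand_eq_rpow_mul_wIntegrand {σ x₁ y : ℝ} (g : ℝ → ℝ) (hx : x₁ ∈ Icc 0 1)
    (hy : 1 < y) : poissonIntegrand σ g x₁ y = x₁ ^ σ * wIntegrand σ g x₁ y := by
  obtain ⟨hx₀, hx₁⟩ := hx
  have hnum : 1 - |x₁ - 1| ^ 2 = x₁ * (2 - x₁) := by
    rw [abs_of_nonpos (by linarith)]; ring
  have hdist : |x₁ - 1 - y| = 1 + y - x₁ := by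
    rw [abs_of_neg (by linarith)]; ring
  rw [poissonIntegrand, wIntegrand, hnum, hdist, mul_div_assoc,
    Real.mul_rpow hx₀ (div_nonneg (by linarith) (by nlinarith)), mul_assoc]

section

variable {σ α : ℝ} {g : ℝ → ℝ}

lemma integrableOn_wIntegrand (hσ₀ : 0 ≤ σ) (hσ₁ : σ < 1) (hα : α < 2 * σ)
    (hg_meas : Measurable g) (hg : ∀ y, |g y| ≤ |y| ^ α) {x₁ : ℝ} (hx : x₁ ∈ Icc 0 1) :
    IntegrableOn (wIntegrand σ g x₁) (Ioi 1) := by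
  refine ((integrableOn_Ioi_one_rpow_sq_sub_one_mul_rpow hσ₀ hσ₁ (by linarith :
    α - 1 < 2 * σ - 1)).const_mul (2 ^ σ)).mono' (by unfold wIntegrand; fun_prop) ?_
  exact (ae_restrict_iff' measurableSet_Ioi).2
    (.of_forall fun y (hy : 1 < y) => abs_rpow_div_mul_div_le hσ₀ hx hy (hg y))

lemma abs_integral_wIntegrand_le (hσ₀ : 0 ≤ σ) (hσ₁ : σ < 1) (hα : α < 2 * σ)
    (hg_meas : Measurable g) (hg : ∀ y, |g y| ≤ |y| ^ α) {x₁ : ℝ} (hx : x₁ ∈ Icc 0 1) :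
    |∫ y in Ioi 1, wIntegrand σ g x₁ y|
      ≤ ∫ y in Ioi 1, 2 ^ σ * ((y ^ 2 - 1) ^ (-σ) * y ^ (α - 1)) :=
  (abs_integral_le_integral_abs).trans <| setIntegral_mono_on
    (integrableOn_wIntegrand hσ₀ hσ₁ hα hg_meas hg hx).abs
    ((integrableOn_Ioi_one_rpow_sq_sub_one_mul_rpow hσ₀ hσ₁ (by linarith)).const_mul _)
    measurableSet_Ioi fun y (hy : 1 < y) => abs_rpow_div_mul_div_le hσ₀ hx hy (hg y)

end

/-- Poisson-kernel representation and boundary factorization. Let `σ ∈ (0,1)`,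
`α ∈ [0,2σ)`, and `g : ℝ → ℝ` measurable with `|g(y)| ≤ |y|^α`. Then the
integrand of `w(x₁) = c ∫₁^∞ ((2−x₁)/(y²−1))^σ·g(y)/(1+y−x₁) dy` is absolutely
integrable on `(1,∞)` for `x₁ ∈ [0,1)`, the Poisson-kernel integral
`u(x₁) = c ∫₁^∞ ((1−|x₁−1|²)/(y²−1))^σ·g(y)/|x₁−1−y| dy` satisfies
`u(x₁) = x₁^σ·w(x₁)` for `x₁ ∈ (0,1)`, and `w` is bounded on compact subsets
of `[0,1)`. -/
theorem stmt_16 (σ α c : ℝ) (hσ : σ ∈ Set.Ioo (0:ℝ) 1)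
    (hα : α ∈ Set.Ico (0:ℝ) (2 * σ))
    (g : ℝ → ℝ) (hg_meas : Measurable g) (hg : ∀ y : ℝ, |g y| ≤ |y| ^ α) :
    (∀ x₁ ∈ Set.Ico (0:ℝ) 1,
      IntegrableOn
        (fun y : ℝ => ((2 - x₁) / (y ^ 2 - 1)) ^ σ * (g y / (1 + y - x₁)))
        (Set.Ioi 1)) ∧
    (∀ x₁ ∈ Set.Ioo (0:ℝ) 1,
      c * (∫ y in Set.Ioi (1:ℝ),
            ((1 - |x₁ - 1| ^ 2) / (y ^ 2 - 1)) ^ σ * (g y / |x₁ - 1 - y|))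
        = x₁ ^ σ * (c * ∫ y in Set.Ioi (1:ℝ),
            ((2 - x₁) / (y ^ 2 - 1)) ^ σ * (g y / (1 + y - x₁)))) ∧
    (∀ b ∈ Set.Ioo (0:ℝ) 1, ∃ M : ℝ, ∀ x₁ ∈ Set.Icc (0:ℝ) b,
      |c * ∫ y in Set.Ioi (1:ℝ),
          ((2 - x₁) / (y ^ 2 - 1)) ^ σ * (g y / (1 + y - x₁))| ≤ M) := by
  obtain ⟨hσ₀, hσ₁⟩ := hσ
  have hα : α < 2 * σ := hα.2
  refine ⟨fun x₁ hx => integrableOn_wIntegrand hσ₀.le hσ₁ hα hg_meas hg (Ico_subset_Icc_self hx),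
    fun x₁ hx => ?_, fun b hb =>
      ⟨|c| * ∫ y in Ioi 1, 2 ^ σ * ((y ^ 2 - 1) ^ (-σ) * y ^ (α - 1)), fun x₁ hx => ?_⟩⟩
  · have hu : ∫ y in Ioi 1, poissonIntegrand σ g x₁ y
        = ∫ y in Ioi 1, x₁ ^ σ * wIntegrand σ g x₁ y :=
      setIntegral_congr_fun measurableSet_Ioi fun y hy =>
        poissonIntegrand_eq_rpow_mul_wIntegrand g (Ioo_subset_Icc_self hx) hy
    simp only [poissonIntegrand, wIntegrand, integral_const_mul] at hu
    rw [hu, mul_left_comm]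
  · rw [abs_mul]
    exact mul_le_mul_of_nonneg_left (abs_integral_wIntegrand_le hσ₀.le hσ₁ hα hg_meas hg
      ⟨hx.1, hx.2.trans hb.2.le⟩) (abs_nonneg c)
end
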